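/- arXiv:1004.0031 — 2 statements merged into one kernel-verified Lean document; each statement's English description precedes it below -/
import Mathlib

section
/- For any topological space X, the topological (covering) dimension of X is bounded above by the Hausdorff dimension of X, whenever X is a metric space. In particular, if a compact subset K of a smooth manifold has Hausdorff dimension at most 1, then its covering dimension is at most 1. -/
/-!
STATEMENT 1: For a (separable) metric space, the topological covering dimension is bounded
above by the Hausdorff dimension; in particular, a compact subset of Hausdorff dimension at
most 1 (e.g. of a smooth manifold, measured with respect to any metric) has covering
dimension at most 1: every open cover admits an open refinement in which no point lies in
more than two members.
-/

open Set

/-- `HasCoveringDimLE X K n` : every open cover of `K ⊆ X` admits an open refinement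
covering `K` such that every point of `K` lies in at most `n + 1` members. -/
def HasCoveringDimLE (X : Type) [TopologicalSpace X] (K : Set X) (n : ℕ) : Prop :=
  ∀ 𝒰 : Set (Set X), (∀ U ∈ 𝒰, IsOpen U) → K ⊆ ⋃₀ 𝒰 →
    ∃ 𝒱 : Set (Set X), (∀ V ∈ 𝒱, IsOpen V) ∧ K ⊆ ⋃₀ 𝒱 ∧
      (∀ V ∈ 𝒱, ∃ U ∈ 𝒰, V ⊆ U) ∧
      ∀ x ∈ K, {V ∈ 𝒱 | x ∈ V}.Finite ∧ {V ∈ 𝒱 | x ∈ V}.ncard ≤ n + 1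


section Auxiliary

set_option linter.unusedSectionVars false
set_option maxHeartbeats 1000000

open Metric MeasureTheory TopologicalSpace ENNReal


lemma ennreal_eq_zero_of_forall_le_mul {v c : ℝ≥0∞} (hc : c ≠ ⊤)
    (h : ∀ ε : ℝ≥0∞, 0 < ε → ε ≠ ⊤ → v ≤ c * ε) : v = 0 := by
  refine le_antisymm (ENNReal.le_of_forall_pos_le_add fun ε hε _ => ?_) zero_le
  have hc1 : c + 1 ≠ 0 := by simp
  have hc1t : c + 1 ≠ ⊤ := by simp [hc]
  have hεd : (0:ℝ≥0∞) < (ε : ℝ≥0∞) / (c + 1) :=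
    ENNReal.div_pos (by exact_mod_cast hε.ne') hc1t
  have hεdt : (ε : ℝ≥0∞) / (c + 1) ≠ ⊤ :=
    (ENNReal.div_lt_top ENNReal.coe_ne_top hc1).ne
  calc v ≤ c * ((ε : ℝ≥0∞) / (c + 1)) := h _ hεd hεdt
    _ ≤ (c + 1) * ((ε : ℝ≥0∞) / (c + 1)) := mul_le_mul_left le_self_add _
    _ = (ε : ℝ≥0∞) := ENNReal.mul_div_cancel hc1 hc1t
    _ ≤ 0 + ε := by simp

variable {X : Type} [MetricSpace X] [MeasurableSpace X] [BorelSpace X]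




/-- scale-`δ` Hausdorff pre-content -/
noncomputable def hcont (m : ℝ) (δ : ℝ≥0∞) (s : Set X) : ℝ≥0∞ :=
  ⨅ (t : ℕ → Set X) (_ : s ⊆ ⋃ n, t n) (_ : ∀ n, EMetric.diam (t n) ≤ δ),
    ∑' n, ⨆ _ : (t n).Nonempty, EMetric.diam (t n) ^ m

lemma hausdorff_eq_iSup_hcont (m : ℝ) (s : Set X) :
    μH[m] s = ⨆ (δ : ℝ≥0∞) (_ : 0 < δ), hcont m δ s := by
  rw [MeasureTheory.Measure.hausdorffMeasure_apply]; rfl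

lemma hcont_mono_scale {m : ℝ} {δ δ' : ℝ≥0∞} (h : δ ≤ δ') (s : Set X) :
    hcont m δ' s ≤ hcont m δ s := by
  refine le_iInf₂ fun t hts => le_iInf fun hd => ?_
  exact iInf₂_le_of_le t hts (iInf_le_of_le (fun n => (hd n).trans h) le_rfl)

lemma exists_cover_of_null {m : ℝ} {A : Set X} (hA : μH[m] A = 0) {δ ε : ℝ≥0∞}
    (hδ : 0 < δ) (hε : 0 < ε) :
    ∃ t : ℕ → Set X, A ⊆ (⋃ n, t n) ∧ (∀ n, EMetric.diam (t n) ≤ δ) ∧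
      (∑' n, ⨆ _ : (t n).Nonempty, EMetric.diam (t n) ^ m) < ε := by
  have h0 : hcont m δ A = 0 := by
    refine le_antisymm ?_ zero_le
    rw [hausdorff_eq_iSup_hcont] at hA
    calc hcont m δ A ≤ ⨆ (δ : ℝ≥0∞) (_ : 0 < δ), hcont m δ A :=
          le_iSup₂ (f := fun δ (_ : 0 < δ) => hcont m δ A) δ hδ
    _ = 0 := hA
  have hlt : hcont m δ A < ε := h0 ▸ hε
  rw [hcont] at hlt
  obtain ⟨t, ht⟩ := iInf_lt_iff.1 hlt
  obtain ⟨h1, ht⟩ := iInf_lt_iff.1 ht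
  obtain ⟨h2, ht⟩ := iInf_lt_iff.1 ht
  exact ⟨t, h1, h2, ht⟩

lemma vol_bad_le {A : Set X} {m : ℝ} (hA : μH[m + 1] A = 0) (x : X) {δ : ℝ≥0∞}
    (hδ0 : 0 < δ) (hδtop : δ ≠ ⊤) {ε : ℝ≥0∞} (hε : 0 < ε) {a : ℝ≥0∞}
    (ha0 : a ≠ 0) (hatop : a ≠ ⊤) :
    volume {r : ℝ | a ≤ hcont m δ (A ∩ Metric.sphere x r)} ≤ 2 * ε / a := by
  classical
  obtain ⟨t, htA, htd, hts⟩ := exists_cover_of_null hA hδ0 hε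
  set c : ℕ → ℝ := fun i => if h : (t i).Nonempty then dist h.some x else 0 with hc
  set D : ℕ → ℝ := fun i => (EMetric.diam (t i)).toReal with hD
  set g : ℝ → ℝ≥0∞ := fun r => ∑' i,
      (⨆ _ : (t i).Nonempty, EMetric.diam (t i) ^ m) *
        (Set.Icc (c i - D i) (c i + D i)).indicator 1 r with hg
  have hdiamtop : ∀ i, EMetric.diam (t i) ≠ ⊤ :=
    fun i => ((htd i).trans_lt (lt_top_iff_ne_top.2 hδtop)).ne
  -- termwise measurability
  have hmeas : ∀ i : ℕ, Measurable fun r : ℝ =>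
      (⨆ _ : (t i).Nonempty, EMetric.diam (t i) ^ m) *
        (Set.Icc (c i - D i) (c i + D i)).indicator 1 r := fun i =>
    (measurable_one.indicator measurableSet_Icc).const_mul _
  -- pointwise domination
  have hdom : ∀ r : ℝ, hcont m δ (A ∩ Metric.sphere x r) ≤ g r := by
    intro r
    set s : ℕ → Set X := fun i =>
      if r ∈ Set.Icc (c i - D i) (c i + D i) then t i else ∅ with hs
    have hcov : A ∩ Metric.sphere x r ⊆ ⋃ n, s n := by
      rintro y ⟨hyA, hyS⟩
      obtain ⟨i, hyi⟩ := mem_iUnion.1 (htA hyA)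
      refine mem_iUnion.2 ⟨i, ?_⟩
      have hne : (t i).Nonempty := ⟨y, hyi⟩
      have hdy : dist hne.some y ≤ D i := by
        have h1 : edist hne.some y ≤ EMetric.diam (t i) :=
          EMetric.edist_le_diam_of_mem hne.some_mem hyi
        rw [dist_edist]
        exact ENNReal.toReal_mono (hdiamtop i) h1
      have hry : dist y x = r := Metric.mem_sphere.1 hyS
      have hci : c i = dist hne.some x := by rw [hc]; simp [hne]
      have habs : |c i - r| ≤ D i := by
        rw [hci, ← hry]
        exact le_trans (abs_dist_sub_le _ _ _) hdy
      have hmem : r ∈ Set.Icc (c i - D i) (c i + D i) := by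
        rw [Set.mem_Icc]
        constructor <;> [linarith [abs_le.1 habs]; linarith [abs_le.1 habs]]
      rw [hs]; simpa [hmem] using hyi
    have hd : ∀ n, EMetric.diam (s n) ≤ δ := by
      intro n; simp only [hs]
      split_ifs with h
      · exact htd n
      · exact (EMetric.diam_mono (Set.empty_subset _)).trans (htd n)
    refine le_trans (iInf₂_le_of_le s hcov (iInf_le_of_le hd le_rfl)) ?_
    rw [hg]
    refine ENNReal.tsum_le_tsum fun i => ?_
    simp only [hs]
    split_ifs with h
    · rw [Set.indicator_of_mem h, Pi.one_apply, mul_one]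
    · simp
  -- integral bound
  have hint : (∫⁻ r, g r) ≤ 2 * ε := by
    rw [hg]
    rw [lintegral_tsum fun i => (hmeas i).aemeasurable]
    have hterm : ∀ i : ℕ, (∫⁻ r, (⨆ _ : (t i).Nonempty, EMetric.diam (t i) ^ m) *
        (Set.Icc (c i - D i) (c i + D i)).indicator 1 r) ≤
        2 * ⨆ _ : (t i).Nonempty, EMetric.diam (t i) ^ (m + 1) := by
      intro i
      rw [lintegral_const_mul _ (measurable_one.indicator measurableSet_Icc)]
      rw [lintegral_indicator_one measurableSet_Icc]
      rw [Real.volume_Icc]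
      have harith : c i + D i - (c i - D i) = 2 * D i := by ring
      rw [harith]
      by_cases hne : (t i).Nonempty
      · simp only [hne, ciSup_unique]
        by_cases h0 : EMetric.diam (t i) = 0
        · rw [hD]; simp [h0]
        · have hofD : ENNReal.ofReal (2 * D i) = 2 * EMetric.diam (t i) := by
            rw [ENNReal.ofReal_mul (by norm_num : (0:ℝ) ≤ 2), hD,
              ENNReal.ofReal_toReal (hdiamtop i)]
            norm_num
          rw [hofD, ENNReal.rpow_add m 1 h0 (hdiamtop i), ENNReal.rpow_one]
          ring_nf
          exact le_rfl
      · simp [hne]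
    calc (∑' i, ∫⁻ r, (⨆ _ : (t i).Nonempty, EMetric.diam (t i) ^ m) *
          (Set.Icc (c i - D i) (c i + D i)).indicator 1 r)
        ≤ ∑' i, 2 * ⨆ _ : (t i).Nonempty, EMetric.diam (t i) ^ (m + 1) :=
          ENNReal.tsum_le_tsum hterm
      _ = 2 * ∑' i, ⨆ _ : (t i).Nonempty, EMetric.diam (t i) ^ (m + 1) :=
          ENNReal.tsum_mul_left
      _ ≤ 2 * ε := mul_le_mul_right hts.le _
  -- Markov
  have hgmeas : Measurable g := by
    rw [hg]; exact Measurable.ennreal_tsum hmeas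
  have hsub : {r : ℝ | a ≤ hcont m δ (A ∩ Metric.sphere x r)} ⊆ {r : ℝ | a ≤ g r} :=
    fun r hr => le_trans hr (hdom r)
  calc volume {r : ℝ | a ≤ hcont m δ (A ∩ Metric.sphere x r)}
      ≤ volume {r : ℝ | a ≤ g r} := measure_mono hsub
    _ ≤ (∫⁻ r, g r) / a := meas_ge_le_lintegral_div hgmeas.aemeasurable ha0 hatop
    _ ≤ 2 * ε / a := ENNReal.div_le_div_right hint a







lemma ae_sphere_hausdorff_null {A : Set X} {m : ℝ} (hA : μH[m + 1] A = 0) (x : X) :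
    ∀ᵐ r ∂(volume : Measure ℝ), μH[m] (A ∩ Metric.sphere x r) = 0 := by
  rw [ae_iff]
  have hinv : ∀ j : ℕ, (0:ℝ≥0∞) < ((j : ℝ≥0∞) + 1)⁻¹ :=
    fun j => ENNReal.inv_pos.2 (by simp)
  have hinvtop : ∀ j : ℕ, ((j : ℝ≥0∞) + 1)⁻¹ ≠ ⊤ := by
    intro j
    simp [ENNReal.inv_ne_top]
  have hsub : {r : ℝ | ¬ μH[m] (A ∩ Metric.sphere x r) = 0} ⊆
      ⋃ (j : ℕ) (k : ℕ), {r : ℝ |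
        ((k : ℝ≥0∞) + 1)⁻¹ ≤ hcont m ((j : ℝ≥0∞) + 1)⁻¹ (A ∩ Metric.sphere x r)} := by
    intro r hr
    simp only [mem_setOf_eq] at hr
    by_contra hall
    simp only [mem_iUnion, mem_setOf_eq, not_exists, not_le] at hall
    apply hr
    have hj0 : ∀ j : ℕ, hcont m ((j : ℝ≥0∞) + 1)⁻¹ (A ∩ Metric.sphere x r) = 0 := by
      intro j
      by_contra h0
      obtain ⟨k, hk⟩ := ENNReal.exists_inv_nat_lt h0
      have hk1 : ((k : ℝ≥0∞) + 1)⁻¹ ≤ ((k : ℝ≥0∞))⁻¹ :=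
        ENNReal.inv_le_inv.2 le_self_add
      exact absurd (hall j k) (not_lt.2 (hk1.trans hk.le))
    rw [hausdorff_eq_iSup_hcont]
    refine le_antisymm (iSup₂_le fun δ hδ => ?_) zero_le
    obtain ⟨j, hj⟩ := ENNReal.exists_inv_nat_lt hδ.ne'
    have hle : ((j : ℝ≥0∞) + 1)⁻¹ ≤ δ :=
      le_trans (ENNReal.inv_le_inv.2 le_self_add) hj.le
    calc hcont m δ (A ∩ Metric.sphere x r)
        ≤ hcont m ((j : ℝ≥0∞) + 1)⁻¹ (A ∩ Metric.sphere x r) := hcont_mono_scale hle _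
      _ = 0 := hj0 j
  refine measure_mono_null hsub
    (measure_iUnion_null fun j => measure_iUnion_null fun k => ?_)
  set a : ℝ≥0∞ := ((k : ℝ≥0∞) + 1)⁻¹ with ha
  have ha0 : a ≠ 0 := (hinv k).ne'
  have hatop : a ≠ ⊤ := hinvtop k
  refine ennreal_eq_zero_of_forall_le_mul (c := 2 / a)
    ((ENNReal.div_lt_top (by norm_num) ha0).ne) fun ε hε hεtop => ?_
  calc volume {r : ℝ | a ≤ hcont m ((j : ℝ≥0∞) + 1)⁻¹ (A ∩ Metric.sphere x r)}
      ≤ 2 * ε / a := vol_bad_le hA x (hinv j) (hinvtop j) hε ha0 hatop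
    _ = 2 / a * ε := by
        simp only [div_eq_mul_inv]; ring



lemma subsingleton_ncard_le_one {α : Type*} {s : Set α} (h : s.Subsingleton) :
    s.ncard ≤ 1 := by
  rcases s.eq_empty_or_nonempty with rfl | ⟨a, ha⟩
  · simp
  · simp [h.eq_singleton_of_mem ha]

lemma exists_good_radius {A : Set X} {m : ℝ} (hA : μH[m + 1] A = 0) (x : X) {ρ : ℝ}
    (hρ : 0 < ρ) : ∃ r : ℝ, 0 < r ∧ r < ρ ∧ μH[m] (A ∩ Metric.sphere x r) = 0 := by
  have hae := ae_sphere_hausdorff_null hA x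
  by_contra hno
  push_neg at hno
  have hsub : Ioo (0:ℝ) ρ ⊆ {r : ℝ | ¬ μH[m] (A ∩ Metric.sphere x r) = 0} :=
    fun r hr => hno r hr.1 hr.2
  have h0 : volume (Ioo (0:ℝ) ρ) = 0 := measure_mono_null hsub (ae_iff.1 hae)
  rw [Real.volume_Ioo] at h0
  rw [ENNReal.ofReal_eq_zero] at h0
  linarith

lemma key : ∀ (n : ℕ) (A : Set X), IsSeparable A → μH[(n:ℝ)] A = 0 →
    ∀ 𝒰 : Set (Set X), (∀ U ∈ 𝒰, IsOpen U) → A ⊆ ⋃₀ 𝒰 →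
    ∃ 𝒱 : Set (Set X), (∀ V ∈ 𝒱, IsOpen V) ∧ A ⊆ ⋃₀ 𝒱 ∧ (∀ V ∈ 𝒱, ∃ U ∈ 𝒰, V ⊆ U) ∧
      ∀ x : X, {V ∈ 𝒱 | x ∈ V}.Finite ∧ {V ∈ 𝒱 | x ∈ V}.ncard ≤ n := by
  intro n
  induction n with
  | zero =>
    intro A hsep hA 𝒰 h𝒰 hcov
    have hAe : A = ∅ := by
      by_contra h
      obtain ⟨a, ha⟩ := nonempty_iff_ne_empty.2 h
      have h1 : μH[(0:ℝ)] ({a} : Set X) ≤ μH[((0:ℕ):ℝ)] A := by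
        rw [Nat.cast_zero]
        exact measure_mono (singleton_subset_iff.2 ha)
      rw [MeasureTheory.Measure.hausdorffMeasure_zero_singleton, hA] at h1
      simp at h1
    exact ⟨∅, by simp, by simp [hAe], by simp, fun x => by simp⟩
  | succ n ih =>
    intro A hsep hA 𝒰 h𝒰 hcov
    rcases eq_empty_or_nonempty A with hAe | hAne
    · exact ⟨∅, by simp, by simp [hAe], by simp, fun x => by simp⟩
    have hA' : μH[(n:ℝ) + 1] A = 0 := by
      have hcast : ((n:ℝ) + 1) = ((n + 1 : ℕ):ℝ) := by push_cast; ring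
      rw [hcast]; exact hA
    classical
    have hch : ∀ a : ↥A, ∃ U ∈ 𝒰, ∃ ρ : ℝ, 0 < ρ ∧ Metric.ball (a:X) ρ ⊆ U ∧
        μH[(n:ℝ)] (A ∩ Metric.sphere (a:X) ρ) = 0 := by
      intro a
      obtain ⟨U, hU𝒰, haU⟩ := hcov a.2
      obtain ⟨ρ, hρ, hballU⟩ := Metric.isOpen_iff.1 (h𝒰 U hU𝒰) _ haU
      obtain ⟨s, hs0, hsρ, hsnull⟩ := exists_good_radius hA' (a:X) hρ
      exact ⟨U, hU𝒰, s, hs0, (Metric.ball_subset_ball hsρ.le).trans hballU, hsnull⟩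
    choose U hU r hr0 hball hsph using hch
    haveI : SeparableSpace ↥A := hsep.separableSpace
    haveI : SecondCountableTopology ↥A := UniformSpace.secondCountable_of_separable _
    obtain ⟨T, hTc, hTU⟩ := TopologicalSpace.isOpen_iUnion_countable
      (fun a : ↥A => (Subtype.val ⁻¹' Metric.ball (a:X) (r a) : Set ↥A))
      (fun a => Metric.isOpen_ball.preimage continuous_subtype_val)
    have hmemself : ∀ b : ↥A, b ∈ ⋃ a : ↥A, (Subtype.val ⁻¹' Metric.ball (a:X) (r a)) :=
      fun b => mem_iUnion.2 ⟨b, by simp [Metric.mem_ball, hr0 b]⟩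
    have hTne : T.Nonempty := by
      rcases hAne with ⟨a, haA⟩
      by_contra hTe
      rw [not_nonempty_iff_eq_empty] at hTe
      have hm := hmemself ⟨a, haA⟩
      rw [← hTU] at hm
      simp [hTe] at hm
    obtain ⟨e, hT⟩ := hTc.exists_eq_range hTne
    have hAcov : ∀ y ∈ A, ∃ i : ℕ, y ∈ Metric.ball ((e i : ↥A) : X) (r (e i)) := by
      intro y hy
      have hm := hmemself ⟨y, hy⟩
      rw [← hTU] at hm
      obtain ⟨b, hbT, hyb⟩ := mem_iUnion₂.1 hm
      rw [hT] at hbT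
      obtain ⟨i, rfl⟩ := hbT
      exact ⟨i, hyb⟩
    set L : Set X := A ∩ ⋃ i : ℕ, Metric.sphere ((e i : ↥A):X) (r (e i)) with hL
    have hLnull : μH[(n:ℝ)] L = 0 := by
      refine measure_mono_null ?_ (measure_iUnion_null fun i => hsph (e i))
      rw [hL, inter_iUnion]
    obtain ⟨𝒱', hV'o, hV'c, hV'r, hV'n⟩ :=
      ih L (hsep.mono inter_subset_left) hLnull 𝒰 h𝒰 (inter_subset_left.trans hcov)
    set W : ℕ → Set X := fun i => Metric.ball ((e i : ↥A):X) (r (e i)) \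
        ⋃ j ∈ Finset.range i, Metric.closedBall ((e j : ↥A):X) (r (e j)) with hW
    have hWopen : ∀ i, IsOpen (W i) := fun i =>
      Metric.isOpen_ball.sdiff (isClosed_biUnion_finset fun j _ => Metric.isClosed_closedBall)
    have hWsub : ∀ i, W i ⊆ U (e i) := fun i => diff_subset.trans (hball (e i))
    have hWdisj : ∀ i j, i < j → ∀ y, y ∈ W i → y ∈ W j → False := by
      intro i j hij y hyi hyj
      exact hyj.2 (mem_biUnion (Finset.mem_range.2 hij)
        (Metric.ball_subset_closedBall hyi.1))
    have hWcov : ∀ y ∈ A, y ∉ L → ∃ i, y ∈ W i := by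
      intro y hy hyL
      have hex : ∃ i, y ∈ Metric.ball ((e i : ↥A):X) (r (e i)) := hAcov y hy
      refine ⟨Nat.find hex, Nat.find_spec hex, ?_⟩
      intro hmem
      simp only [mem_iUnion] at hmem
      obtain ⟨j, hj, hyj⟩ := hmem
      have hjlt : j < Nat.find hex := Finset.mem_range.1 hj
      have hnb : y ∉ Metric.ball ((e j : ↥A):X) (r (e j)) := Nat.find_min hex hjlt
      have hns : y ∉ Metric.sphere ((e j : ↥A):X) (r (e j)) := by
        intro hs
        exact hyL ⟨hy, mem_iUnion.2 ⟨j, hs⟩⟩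
      rw [Metric.mem_closedBall] at hyj
      rw [Metric.mem_ball] at hnb
      rw [Metric.mem_sphere] at hns
      rcases lt_or_eq_of_le hyj with h | h
      exacts [hnb h, hns h]
    refine ⟨𝒱' ∪ Set.range W, ?_, ?_, ?_, ?_⟩
    · rintro V (hV | ⟨i, rfl⟩)
      exacts [hV'o V hV, hWopen i]
    · intro y hy
      by_cases hyL : y ∈ L
      · obtain ⟨V, hV, hyV⟩ := hV'c hyL
        exact ⟨V, Or.inl hV, hyV⟩
      · obtain ⟨i, hi⟩ := hWcov y hy hyL
        exact ⟨W i, Or.inr ⟨i, rfl⟩, hi⟩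
    · rintro V (hV | ⟨i, rfl⟩)
      exacts [hV'r V hV, ⟨U (e i), hU (e i), hWsub i⟩]
    · intro x
      have hsplit : {V ∈ 𝒱' ∪ Set.range W | x ∈ V} ⊆
          {V ∈ 𝒱' | x ∈ V} ∪ {V ∈ Set.range W | x ∈ V} := by
        rintro V ⟨hV | hV, hxV⟩
        exacts [Or.inl ⟨hV, hxV⟩, Or.inr ⟨hV, hxV⟩]
      have hWsing : {V ∈ Set.range W | x ∈ V}.Subsingleton := by
        rintro V₁ ⟨⟨i, rfl⟩, hx1⟩ V₂ ⟨⟨j, rfl⟩, hx2⟩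
        rcases lt_trichotomy i j with h | h | h
        · exact (hWdisj i j h x hx1 hx2).elim
        · rw [h]
        · exact (hWdisj j i h x hx2 hx1).elim
      have hfin1 : {V ∈ 𝒱' | x ∈ V}.Finite := (hV'n x).1
      have hfin2 : {V ∈ Set.range W | x ∈ V}.Finite := hWsing.finite
      refine ⟨Set.Finite.subset (hfin1.union hfin2) hsplit, ?_⟩
      calc {V ∈ 𝒱' ∪ Set.range W | x ∈ V}.ncard
          ≤ ({V ∈ 𝒱' | x ∈ V} ∪ {V ∈ Set.range W | x ∈ V}).ncard :=
            Set.ncard_le_ncard hsplit (hfin1.union hfin2)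
        _ ≤ {V ∈ 𝒱' | x ∈ V}.ncard + {V ∈ Set.range W | x ∈ V}.ncard :=
            Set.ncard_union_le _ _
        _ ≤ n + 1 := add_le_add (hV'n x).2 (subsingleton_ncard_le_one hWsing)

end Auxiliary

open MeasureTheory TopologicalSpace NNReal ENNReal

theorem coveringDim_le_dimH :
    (∀ (X : Type) [MetricSpace X] [TopologicalSpace.SeparableSpace X] (n : ℕ),
        dimH (Set.univ : Set X) ≤ n → HasCoveringDimLE X Set.univ n) ∧
    (∀ (X : Type) [MetricSpace X] (K : Set X),
        IsCompact K → dimH K ≤ 1 → HasCoveringDimLE X K 1) := by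
  constructor
  · intro X _ _ n hdim
    unfold HasCoveringDimLE
    intro 𝒰 h𝒰 hcov
    borelize X
    have hlt : dimH (Set.univ : Set X) < (((n + 1 : ℕ) : ℝ≥0) : ℝ≥0∞) :=
      lt_of_le_of_lt hdim (by exact_mod_cast Nat.lt_succ_self n)
    have hnull : μH[((n + 1 : ℕ) : ℝ)] (Set.univ : Set X) = 0 := by
      have h := hausdorffMeasure_of_dimH_lt hlt
      convert h using 2
      rw [NNReal.coe_natCast]
    obtain ⟨𝒱, h1, h2, h3, h4⟩ := key (n + 1) Set.univ
      (TopologicalSpace.IsSeparable.of_separableSpace _) hnull 𝒰 h𝒰 hcov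
    exact ⟨𝒱, h1, h2, h3, fun x _ => h4 x⟩
  · intro X _ K hK hdim
    unfold HasCoveringDimLE
    intro 𝒰 h𝒰 hcov
    borelize X
    have hlt : dimH K < (((2 : ℕ) : ℝ≥0) : ℝ≥0∞) :=
      lt_of_le_of_lt hdim (by norm_num)
    have hnull : μH[((2 : ℕ) : ℝ)] K = 0 := by
      have h := hausdorffMeasure_of_dimH_lt hlt
      convert h using 2
      rw [NNReal.coe_natCast]
    obtain ⟨𝒱, h1, h2, h3, h4⟩ := key 2 K hK.isSeparable hnull 𝒰 h𝒰 hcov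
    exact ⟨𝒱, h1, h2, h3, fun x _ => h4 x⟩
end

section
/- Let A be an abelian Lie group with Lie algebra 𝔞, M a smooth manifold, ω₁, ω₂ ∈ Ω¹_𝔞(M), and g : M → A smooth. Then the identity g(γ(1))·F_{ω₁}(γ) = F_{ω₂}(γ)·g(γ(0)) holds for all smooth paths γ in M if and only if ω₂ = ω₁ − g*θ̄, where θ̄ is the (right-invariant) Maurer–Cartan form on A and F_ω(γ) = exp(−∫_γ ω). -/
/-!
STATEMENT 19: Let `A = U(1)` (the unit circle in `ℂ`, an abelian Lie group with Lie algebra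
`𝔞 = ℝ`), `M` a smooth manifold without boundary, `ω₁, ω₂` smooth real-valued 1-forms on
`M` and `g : M → U(1)` smooth.  With `F_ω (γ) = exp(−i ∫₀¹ ω(γ t)(γ̇ t) dt)`, the identity
`g (γ 1) · F_{ω₁} (γ) = F_{ω₂} (γ) · g (γ 0)` holds for all smooth paths `γ` in `M` if and
only if `ω₂ = ω₁ − g*θ̄`, where `g*θ̄ = dlog g` is the pullback of the Maurer–Cartan form.
-/

open Manifold

/-- Parallel transport `exp(−i ∫₀¹ ω(γ t)(γ̇ t) dt)` in the trivial `U(1)`-bundle. -/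
noncomputable def circleTransport
    {E : Type} [NormedAddCommGroup E] [NormedSpace ℝ E]
    {H : Type} [TopologicalSpace H] (I : ModelWithCorners ℝ E H)
    {M : Type} [TopologicalSpace M] [ChartedSpace H M]
    (ω : ∀ x : M, TangentSpace I x → ℝ) (γ : ℝ → M) : ℂ :=
  Complex.exp (-Complex.I *
    (∫ t in (0:ℝ)..1, ω (γ t) (mfderiv 𝓘(ℝ, ℝ) I γ t ((1:ℝ) : TangentSpace 𝓘(ℝ, ℝ) t))))

/-- The real coefficient of the pullback `g*θ̄ = dlog g` of the Maurer–Cartan form of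
`U(1)` along a `U(1) ⊆ ℂ`-valued map. -/
noncomputable def mcPullback
    {E : Type} [NormedAddCommGroup E] [NormedSpace ℝ E]
    {H : Type} [TopologicalSpace H] (I : ModelWithCorners ℝ E H)
    {M : Type} [TopologicalSpace M] [ChartedSpace H M]
    (g : M → ℂ) (x : M) (v : TangentSpace I x) : ℝ :=
  ((g x)⁻¹ * (show ℂ from mfderiv I 𝓘(ℝ, ℂ) g x v) / Complex.I).re

open Set Filter
open scoped Topology Real
set_option linter.unusedSectionVars false
set_option maxHeartbeats 1000000

section Aux
variable {E : Type} [NormedAddCommGroup E] [NormedSpace ℝ E]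
  {H : Type} [TopologicalSpace H] {I : ModelWithCorners ℝ E H}
  {M : Type} [TopologicalSpace M] [ChartedSpace H M] [IsManifold I (⊤ : ℕ∞) M]

lemma gcomp_deriv (g : M → ℂ) (hg : ContMDiff I 𝓘(ℝ, ℂ) (⊤ : ℕ∞) g)
    {γ : ℝ → M} (hγ : ContMDiff 𝓘(ℝ, ℝ) I (⊤ : ℕ∞) γ) (t : ℝ) :
    (show ℂ from mfderiv I 𝓘(ℝ, ℂ) g (γ t) (mfderiv 𝓘(ℝ, ℝ) I γ t ((1:ℝ) : TangentSpace 𝓘(ℝ, ℝ) t))) = deriv (g ∘ γ) t := by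
  have h : mfderiv 𝓘(ℝ, ℝ) 𝓘(ℝ, ℂ) (g ∘ γ) t
      = (mfderiv I 𝓘(ℝ, ℂ) g (γ t)).comp (mfderiv 𝓘(ℝ, ℝ) I γ t) :=
    mfderiv_comp t (hg.mdifferentiableAt (by simp)) (hγ.mdifferentiableAt (by simp))
  have h2 : mfderiv 𝓘(ℝ, ℝ) 𝓘(ℝ, ℂ) (g ∘ γ) t = fderiv ℝ (g ∘ γ) t := mfderiv_eq_fderiv
  calc (show ℂ from mfderiv I 𝓘(ℝ, ℂ) g (γ t) (mfderiv 𝓘(ℝ, ℝ) I γ t ((1:ℝ) : TangentSpace 𝓘(ℝ, ℝ) t)))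
      = (show ℂ from mfderiv 𝓘(ℝ, ℝ) 𝓘(ℝ, ℂ) (g ∘ γ) t ((1:ℝ) : TangentSpace 𝓘(ℝ, ℝ) t)) := by rw [h]; rfl
    _ = fderiv ℝ (g ∘ γ) t ((1:ℝ)) := by rw [h2]; rfl
    _ = deriv (g ∘ γ) t := fderiv_apply_one_eq_deriv ..


lemma key_s19 (g : M → ℂ) (hg : ContMDiff I 𝓘(ℝ, ℂ) (⊤ : ℕ∞) g) (hg_unit : ∀ x, ‖g x‖ = 1)
    {γ : ℝ → M} (hγ : ContMDiff 𝓘(ℝ, ℝ) I (⊤ : ℕ∞) γ) :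
    Continuous (fun t => mcPullback I g (γ t)
        (mfderiv 𝓘(ℝ, ℝ) I γ t ((1:ℝ) : TangentSpace 𝓘(ℝ, ℝ) t))) ∧
    ∀ t : ℝ, g (γ t) = g (γ 0) * Complex.exp (Complex.I *
        ((∫ s in (0:ℝ)..t, mcPullback I g (γ s)
          (mfderiv 𝓘(ℝ, ℝ) I γ s ((1:ℝ) : TangentSpace 𝓘(ℝ, ℝ) s)) : ℝ) : ℂ)) := by
  set u : ℝ → ℂ := g ∘ γ with hu_def
  have hu := contMDiff_iff_contDiff.mp (hg.comp hγ)
  have hud : ∀ t, HasDerivAt u (deriv u t) t := fun t =>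
    ((hu.differentiable (by simp)) t).hasDerivAt
  have hunit : ∀ t, (starRingEnd ℂ) (u t) * u t = 1 := by
    intro t
    rw [Complex.conj_mul']
    norm_cast
    rw [show u t = g (γ t) from rfl, hg_unit (γ t)]
    norm_num
  have hre : ∀ t, ((starRingEnd ℂ) (u t) * deriv u t).re = 0 := by
    intro t
    have h1 : HasDerivAt (fun t => (starRingEnd ℂ) (u t) * u t)
        ((starRingEnd ℂ) (deriv u t) * u t + (starRingEnd ℂ) (u t) * deriv u t) t :=
      ((hud t).star).mul (hud t)
    have h2 : HasDerivAt (fun t => (starRingEnd ℂ) (u t) * u t) 0 t := by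
      have heq : (fun t => (starRingEnd ℂ) (u t) * u t) = fun _ => (1:ℂ) := funext hunit
      rw [heq]; exact hasDerivAt_const t 1
    have h3 := h1.unique h2
    have h4 := congrArg Complex.re h3
    simp only [Complex.add_re, Complex.mul_re, Complex.conj_re, Complex.conj_im,
      Complex.zero_re] at h4
    simp only [Complex.mul_re, Complex.conj_re, Complex.conj_im]
    linarith
  have hm_eq : ∀ t, mcPullback I g (γ t)
      (mfderiv 𝓘(ℝ, ℝ) I γ t ((1:ℝ) : TangentSpace 𝓘(ℝ, ℝ) t))
      = ((starRingEnd ℂ) (u t) * deriv u t).im := by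
    intro t
    rw [mcPullback, gcomp_deriv g hg hγ t]
    have hinv : (g (γ t))⁻¹ = (starRingEnd ℂ) (u t) :=
      (eq_inv_of_mul_eq_one_left (hunit t)).symm
    rw [hinv]
    have hz := hre t
    set z := (starRingEnd ℂ) (u t) * deriv u t
    rw [Complex.div_I]
    simp [Complex.mul_re, hz]
  have hmc : Continuous (fun t => mcPullback I g (γ t)
      (mfderiv 𝓘(ℝ, ℝ) I γ t ((1:ℝ) : TangentSpace 𝓘(ℝ, ℝ) t))) := by
    simp only [hm_eq]
    exact Complex.continuous_im.comp
      ((continuous_star.comp hu.continuous).mul (hu.continuous_deriv (by exact_mod_cast le_top)))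
  refine ⟨hmc, ?_⟩
  set m : ℝ → ℝ := fun t => mcPullback I g (γ t)
      (mfderiv 𝓘(ℝ, ℝ) I γ t ((1:ℝ) : TangentSpace 𝓘(ℝ, ℝ) t)) with hm_def
  have hR : ∀ t, HasDerivAt (fun t => ∫ s in (0:ℝ)..t, m s) (m t) t := fun t =>
    (hmc.integral_hasStrictDerivAt 0 t).hasDerivAt
  have hu' : ∀ t, HasDerivAt u (u t * (Complex.I * (m t : ℂ))) t := by
    intro t
    convert hud t using 1
    have h5 : (starRingEnd ℂ) (u t) * deriv u t = Complex.I * (m t : ℂ) := by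
      apply Complex.ext
      · rw [show (Complex.I * ((m t : ℝ) : ℂ)).re = 0 by simp]
        exact hre t
      · rw [show (Complex.I * ((m t : ℝ) : ℂ)).im = m t by simp]
        exact (hm_eq t).symm
    have h6 : u t * ((starRingEnd ℂ) (u t) * deriv u t) = deriv u t := by
      rw [← mul_assoc, mul_comm (u t), hunit t, one_mul]
    rw [← h5, h6]
  set w : ℝ → ℂ := fun t =>
    u t * Complex.exp (-(Complex.I * ((∫ s in (0:ℝ)..t, m s : ℝ) : ℂ))) with hw_def
  have hw : ∀ t, HasDerivAt w 0 t := by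
    intro t
    have hRc : HasDerivAt (fun t => -(Complex.I * ((∫ s in (0:ℝ)..t, m s : ℝ) : ℂ)))
        (-(Complex.I * (m t : ℂ))) t := (((hR t).ofReal_comp).const_mul Complex.I).neg
    have h7 := (hu' t).mul hRc.cexp
    exact h7.congr_deriv (by ring)
  have hwconst : ∀ t, w t = w 0 := fun t =>
    is_const_of_deriv_eq_zero (fun s => (hw s).differentiableAt)
      (fun s => (hw s).deriv) t 0
  intro t
  have h0 : w 0 = u 0 := by simp [hw_def]
  have h8 := hwconst t
  rw [h0] at h8
  have h9 := congrArg (· * Complex.exp (Complex.I * ((∫ s in (0:ℝ)..t, m s : ℝ) : ℂ))) h8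
  simp only [hw_def, mul_assoc, ← Complex.exp_add] at h9
  simpa [hu_def] using h9


lemma exists_curve [I.Boundaryless] (x : M) (v : TangentSpace I x) :
    ∃ c : ℝ → M, ContMDiff 𝓘(ℝ, ℝ) I (⊤ : ℕ∞) c ∧ c 0 = x ∧
      mfderiv 𝓘(ℝ, ℝ) I c 0 ((1:ℝ) : TangentSpace 𝓘(ℝ, ℝ) (0:ℝ)) = v := by
  by_cases hv : v = 0
  · refine ⟨fun _ => x, contMDiff_const, rfl, ?_⟩
    rw [hv, mfderiv_const]
    rfl
  · set e := extChartAt I x with he_def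
    have hx : x ∈ e.source := mem_extChartAt_source x
    have hc₀ : e x ∈ e.target := e.map_source hx
    obtain ⟨ε, hε, hball⟩ := Metric.isOpen_iff.mp (isOpen_extChartAt_target x) (e x) hc₀
    have hvnorm : (0:ℝ) < ‖(show E from v)‖ := norm_pos_iff.mpr (by exact hv)
    set b : ℝ := ‖(show E from v)‖ / ε with hb_def
    have hb : 0 < b := div_pos hvnorm hε
    set ψ : ℝ → ℝ := fun t => t / (1 + b ^ 2 * t ^ 2) with hψ_def
    have hden : ∀ t : ℝ, 0 < 1 + b ^ 2 * t ^ 2 := fun t => by positivity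
    have hψ_bound : ∀ t : ℝ, |ψ t| ≤ 1 / (2 * b) := by
      intro t
      rw [hψ_def]
      rw [abs_div, abs_of_pos (hden t), div_le_div_iff₀ (hden t) (by positivity)]
      nlinarith [sq_nonneg (b * |t| - 1), sq_abs t, abs_nonneg t]
    have hψ_smooth : ContDiff ℝ (⊤ : ℕ∞) ψ :=
      contDiff_id.div (contDiff_const.add (contDiff_const.mul (contDiff_id.pow 2)))
        (fun t => ne_of_gt (hden t))
    have hψ0 : ψ 0 = 0 := by simp [hψ_def]
    have hψ' : HasDerivAt ψ 1 0 := by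
      have hd : HasDerivAt (fun t : ℝ => 1 + b ^ 2 * t ^ 2) 0 0 := by
        have h1 : HasDerivAt (fun t : ℝ => t ^ 2) ((2:ℕ) * (0:ℝ) ^ (2-1)) 0 := hasDerivAt_pow 2 0
        have h2 := (h1.const_mul (b ^ 2)).const_add 1
        exact h2.congr_deriv (by norm_num)
      have h3 := (hasDerivAt_id (0:ℝ)).div hd (ne_of_gt (hden 0))
      exact h3.congr_deriv (by norm_num)
    set p : ℝ → E := fun t => e x + ψ t • (show E from v) with hp_def
    have hp_mem : ∀ t, p t ∈ e.target := by
      intro t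
      apply hball
      rw [Metric.mem_ball, hp_def, dist_eq_norm]
      have : e x + ψ t • (show E from v) - e x = ψ t • (show E from v) := by abel
      rw [this, norm_smul, Real.norm_eq_abs]
      calc |ψ t| * ‖(show E from v)‖ ≤ 1 / (2 * b) * ‖(show E from v)‖ := by
            apply mul_le_mul_of_nonneg_right (hψ_bound t) (norm_nonneg (show E from v))
        _ = ε / 2 := by
            rw [hb_def]
            field_simp
        _ < ε := by linarith
    set c : ℝ → M := fun t => e.symm (p t) with hc_def
    have hp_smooth : ContMDiff 𝓘(ℝ, ℝ) 𝓘(ℝ, E) (⊤ : ℕ∞) p := by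
      rw [contMDiff_iff_contDiff]
      exact (contDiff_const.add (hψ_smooth.smul contDiff_const)).of_le (mod_cast le_top)
    have hc_smooth : ContMDiff 𝓘(ℝ, ℝ) I (⊤ : ℕ∞) c :=
      (contMDiffOn_extChartAt_symm x).comp_contMDiff hp_smooth hp_mem
    have hc0 : c 0 = x := by
      rw [hc_def]
      simp only [hp_def, hψ0, zero_smul, add_zero]
      convert e.left_inv hx using 2
      exact add_eq_left.mpr (zero_smul ℝ _)
    have hec : ∀ t, e (c t) = p t := fun t => e.right_inv (hp_mem t)
    refine ⟨c, hc_smooth, hc0, ?_⟩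
    have hmf : HasMFDerivAt 𝓘(ℝ, ℝ) I c 0
        (ContinuousLinearMap.smulRight (1 : ℝ →L[ℝ] ℝ) v) := by
      rw [HasMFDerivAt]
      constructor
      · exact hc_smooth.continuous.continuousAt
      · have hrange : range (𝓘(ℝ, ℝ) : ModelWithCorners ℝ ℝ ℝ) = univ := by
          simp
        have hwr : writtenInExtChartAt 𝓘(ℝ, ℝ) I (0:ℝ) c = fun t => p t := by
          funext t
          simp only [writtenInExtChartAt, Function.comp_apply, extChartAt_model_space_eq_id,
            PartialEquiv.refl_symm, PartialEquiv.refl_coe, id_eq]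
          rw [show extChartAt I (c 0) = e by rw [hc0]]
          exact hec t
        rw [hwr, hrange]
        have hpd : HasDerivAt p (show E from v) 0 := by
          have h1 : HasDerivAt (fun t => ψ t • (show E from v)) ((1:ℝ) • (show E from v)) 0 := hψ'.smul_const (show E from v)
          have h2 := h1.const_add (e x)
          rw [one_smul] at h2
          exact h2
        have := hpd.hasFDerivAt.hasFDerivWithinAt (s := univ)
        exact this
    have := hmf.mfderiv
    rw [this]
    exact one_smul ℝ v


lemma circleTransport_eq (ω : ∀ x : M, TangentSpace I x → ℝ) (γ : ℝ → M) :
    circleTransport I ω γ = Complex.exp (-(Complex.I *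
      ((∫ t in (0:ℝ)..1, ω (γ t)
        (mfderiv 𝓘(ℝ, ℝ) I γ t ((1:ℝ) : TangentSpace 𝓘(ℝ, ℝ) t)) : ℝ) : ℂ))) := by
  rw [circleTransport, neg_mul]

lemma mfderiv_scale {c : ℝ → M} (hc : ContMDiff 𝓘(ℝ, ℝ) I (⊤ : ℕ∞) c) (s t : ℝ) :
    mfderiv 𝓘(ℝ, ℝ) I (fun t => c (s * t)) t ((1:ℝ) : TangentSpace 𝓘(ℝ, ℝ) t)
      = s • mfderiv 𝓘(ℝ, ℝ) I c (s * t) ((1:ℝ) : TangentSpace 𝓘(ℝ, ℝ) (s*t)) := by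
  have hlin : MDifferentiableAt 𝓘(ℝ, ℝ) 𝓘(ℝ, ℝ) (fun t : ℝ => s * t) t :=
    mdifferentiableAt_iff_differentiableAt.mpr (differentiableAt_id.const_mul s)
  have h := mfderiv_comp t (hc.mdifferentiableAt (by simp)) hlin
  have h2 : mfderiv 𝓘(ℝ, ℝ) 𝓘(ℝ, ℝ) (fun t : ℝ => s * t) t
      ((1:ℝ) : TangentSpace 𝓘(ℝ, ℝ) t) = s • ((1:ℝ) : TangentSpace 𝓘(ℝ, ℝ) (s*t)) := by
    rw [mfderiv_eq_fderiv]
    have hd : HasDerivAt (fun t : ℝ => s * t) s t := by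
      simpa using (hasDerivAt_id t).const_mul s
    rw [hd.hasFDerivAt.fderiv]
    show (1:ℝ) • s = s • (1:ℝ)
    rw [one_smul, smul_eq_mul, mul_one]
  calc mfderiv 𝓘(ℝ, ℝ) I (fun t => c (s * t)) t ((1:ℝ) : TangentSpace 𝓘(ℝ, ℝ) t)
      = mfderiv 𝓘(ℝ, ℝ) I (c ∘ fun t : ℝ => s * t) t ((1:ℝ) : TangentSpace 𝓘(ℝ, ℝ) t) := rfl
    _ = mfderiv 𝓘(ℝ, ℝ) I c (s * t)
        (mfderiv 𝓘(ℝ, ℝ) 𝓘(ℝ, ℝ) (fun t : ℝ => s * t) t ((1:ℝ) : TangentSpace 𝓘(ℝ, ℝ) t)) := by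
        rw [h]; rfl
    _ = s • mfderiv 𝓘(ℝ, ℝ) I c (s * t) ((1:ℝ) : TangentSpace 𝓘(ℝ, ℝ) (s*t)) := by
        rw [h2]; exact map_smul _ s _

lemma mcPullback_smul (g : M → ℂ) (x : M) (s : ℝ) (v : TangentSpace I x) :
    mcPullback I g x (s • v) = s * mcPullback I g x v := by
  rw [mcPullback, mcPullback]
  have h : (show ℂ from mfderiv I 𝓘(ℝ, ℂ) g x (s • v))
      = (s : ℂ) * (show ℂ from mfderiv I 𝓘(ℝ, ℂ) g x v) := by
    rw [map_smul]
    exact Complex.real_smul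
  rw [h, show (g x)⁻¹ * ((s : ℂ) * (show ℂ from mfderiv I 𝓘(ℝ, ℂ) g x v)) / Complex.I
    = (s : ℂ) * ((g x)⁻¹ * (show ℂ from mfderiv I 𝓘(ℝ, ℂ) g x v) / Complex.I) by ring]
  exact Complex.re_ofReal_mul _ _

end Aux

theorem gauge_transformation_iff_maurer_cartan
    {E : Type} [NormedAddCommGroup E] [NormedSpace ℝ E]
    {H : Type} [TopologicalSpace H] (I : ModelWithCorners ℝ E H) [I.Boundaryless]
    {M : Type} [TopologicalSpace M] [ChartedSpace H M] [IsManifold I (⊤ : ℕ∞) M]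
    (ω₁ ω₂ : ∀ x : M, TangentSpace I x → ℝ)
    (hω₁_lin : ∀ x, IsLinearMap ℝ (ω₁ x)) (hω₂_lin : ∀ x, IsLinearMap ℝ (ω₂ x))
    (hω₁ : ∀ γ : ℝ → M, ContMDiff 𝓘(ℝ, ℝ) I (⊤ : ℕ∞) γ →
      Continuous fun t => ω₁ (γ t) (mfderiv 𝓘(ℝ, ℝ) I γ t ((1:ℝ) : TangentSpace 𝓘(ℝ, ℝ) t)))
    (hω₂ : ∀ γ : ℝ → M, ContMDiff 𝓘(ℝ, ℝ) I (⊤ : ℕ∞) γ →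
      Continuous fun t => ω₂ (γ t) (mfderiv 𝓘(ℝ, ℝ) I γ t ((1:ℝ) : TangentSpace 𝓘(ℝ, ℝ) t)))
    (g : M → ℂ) (hg : ContMDiff I 𝓘(ℝ, ℂ) (⊤ : ℕ∞) g) (hg_unit : ∀ x, ‖g x‖ = 1) :
    (∀ γ : ℝ → M, ContMDiff 𝓘(ℝ, ℝ) I (⊤ : ℕ∞) γ →
        g (γ 1) * circleTransport I ω₁ γ = circleTransport I ω₂ γ * g (γ 0)) ↔
      (∀ (x : M) (v : TangentSpace I x), ω₂ x v = ω₁ x v - mcPullback I g x v) := by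
  have hg0 : ∀ y : M, g y ≠ 0 := by
    intro y hy
    have := hg_unit y
    rw [hy] at this
    simp at this
  constructor
  · -- forward direction
    intro hpath x v
    obtain ⟨c, hc, hc0, hcv⟩ := exists_curve (I := I) x v
    subst hc0
    obtain ⟨hmcont, hkey⟩ := key_s19 g hg hg_unit hc
    set a₁ : ℝ → ℝ := fun t => ω₁ (c t)
      (mfderiv 𝓘(ℝ, ℝ) I c t ((1:ℝ) : TangentSpace 𝓘(ℝ, ℝ) t)) with ha₁_def
    set a₂ : ℝ → ℝ := fun t => ω₂ (c t)
      (mfderiv 𝓘(ℝ, ℝ) I c t ((1:ℝ) : TangentSpace 𝓘(ℝ, ℝ) t)) with ha₂_def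
    set mm : ℝ → ℝ := fun t => mcPullback I g (c t)
      (mfderiv 𝓘(ℝ, ℝ) I c t ((1:ℝ) : TangentSpace 𝓘(ℝ, ℝ) t)) with hmm_def
    have hca₁ : Continuous a₁ := hω₁ c hc
    have hca₂ : Continuous a₂ := hω₂ c hc
    have hns : ∀ s : ℝ, ∃ n : ℤ,
        (∫ t in (0:ℝ)..s, mm t) - (∫ t in (0:ℝ)..s, a₁ t) + (∫ t in (0:ℝ)..s, a₂ t)
          = n * (2 * Real.pi) := by
      intro s
      have hscale : ContMDiff 𝓘(ℝ, ℝ) 𝓘(ℝ, ℝ) (⊤ : ℕ∞) (fun t : ℝ => s * t) :=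
        contMDiff_iff_contDiff.mpr ((contDiff_const.mul contDiff_id).of_le (mod_cast le_top))
      have h1 := hpath (fun t => c (s * t)) (hc.comp hscale)
      rw [circleTransport_eq, circleTransport_eq] at h1
      have hp₁ : ∀ t : ℝ, ω₁ (c (s * t))
          (mfderiv 𝓘(ℝ, ℝ) I (fun t => c (s * t)) t ((1:ℝ) : TangentSpace 𝓘(ℝ, ℝ) t))
          = s * a₁ (s * t) := by
        intro t
        rw [mfderiv_scale hc s t, (hω₁_lin (c (s * t))).map_smul s _, smul_eq_mul]
      have hp₂ : ∀ t : ℝ, ω₂ (c (s * t))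
          (mfderiv 𝓘(ℝ, ℝ) I (fun t => c (s * t)) t ((1:ℝ) : TangentSpace 𝓘(ℝ, ℝ) t))
          = s * a₂ (s * t) := by
        intro t
        rw [mfderiv_scale hc s t, (hω₂_lin (c (s * t))).map_smul s _, smul_eq_mul]
      simp only [hp₁, hp₂, mul_one, mul_zero] at h1
      rw [intervalIntegral.integral_const_mul, intervalIntegral.integral_const_mul] at h1
      have h2 := intervalIntegral.smul_integral_comp_mul_left a₁ s (a := 0) (b := 1)
      have h3 := intervalIntegral.smul_integral_comp_mul_left a₂ s (a := 0) (b := 1)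
      rw [smul_eq_mul] at h2 h3
      rw [h2, h3] at h1
      simp only [mul_zero, mul_one] at h1
      rw [hkey s] at h1
      have h4 : Complex.exp (Complex.I * ((∫ t in (0:ℝ)..s, mm t : ℝ) : ℂ)) *
          Complex.exp (-(Complex.I * ((∫ t in (0:ℝ)..s, a₁ t : ℝ) : ℂ)))
          = Complex.exp (-(Complex.I * ((∫ t in (0:ℝ)..s, a₂ t : ℝ) : ℂ))) := by
        apply mul_left_cancel₀ (hg0 (c 0))
        rw [← mul_assoc, h1]
        exact mul_comm _ _
      have h5 : Complex.exp (Complex.I *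
          (((∫ t in (0:ℝ)..s, mm t) - (∫ t in (0:ℝ)..s, a₁ t) + (∫ t in (0:ℝ)..s, a₂ t) : ℝ) : ℂ))
          = 1 := by
        rw [show (Complex.I *
            (((∫ t in (0:ℝ)..s, mm t) - (∫ t in (0:ℝ)..s, a₁ t)
              + (∫ t in (0:ℝ)..s, a₂ t) : ℝ) : ℂ))
            = (Complex.I * ((∫ t in (0:ℝ)..s, mm t : ℝ) : ℂ)
                + -(Complex.I * ((∫ t in (0:ℝ)..s, a₁ t : ℝ) : ℂ)))
              - (-(Complex.I * ((∫ t in (0:ℝ)..s, a₂ t : ℝ) : ℂ))) by push_cast; ring]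
        rw [Complex.exp_sub, Complex.exp_add, h4]
        exact div_self (Complex.exp_ne_zero _)
      obtain ⟨n, hn⟩ := Complex.exp_eq_one_iff.mp h5
      refine ⟨n, ?_⟩
      have h6 := congrArg Complex.im hn
      simpa using h6
    set F : ℝ → ℝ := fun t => mm t - a₁ t + a₂ t with hF_def
    have hFc : Continuous F := (hmcont.sub hca₁).add hca₂
    have hΦint : ∀ s : ℝ, ∃ n : ℤ, (∫ t in (0:ℝ)..s, F t) = n * (2 * Real.pi) := by
      intro s
      obtain ⟨n, hn⟩ := hns s
      refine ⟨n, ?_⟩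
      simp only [hF_def]
      rw [intervalIntegral.integral_add (f := fun t => mm t - a₁ t) ((hmcont.sub hca₁).intervalIntegrable 0 s)
        (hca₂.intervalIntegrable 0 s),
        intervalIntegral.integral_sub (hmcont.intervalIntegrable 0 s)
        (hca₁.intervalIntegrable 0 s)]
      exact hn
    have hΦd : ∀ s : ℝ, HasDerivAt (fun r => ∫ t in (0:ℝ)..r, F t) (F s) s := fun s =>
      (hFc.integral_hasStrictDerivAt 0 s).hasDerivAt
    have hΦc : Continuous (fun r => ∫ t in (0:ℝ)..r, F t) :=
      continuous_iff_continuousAt.mpr fun s => (hΦd s).continuousAt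
    have h2π : (0:ℝ) < 2 * Real.pi := by linarith [Real.pi_pos]
    have hev : ∀ᶠ s in 𝓝 (0:ℝ), (∫ t in (0:ℝ)..s, F t) = 0 := by
      have hball := (hΦc.continuousAt (x := (0:ℝ))).preimage_mem_nhds
        (Metric.ball_mem_nhds _ h2π)
      filter_upwards [hball] with s hs
      obtain ⟨n, hn⟩ := hΦint s
      simp only [Set.mem_preimage, Metric.mem_ball, intervalIntegral.integral_same,
        dist_zero_right, Real.norm_eq_abs] at hs
      rw [hn] at hs ⊢
      have hn0 : n = 0 := by
        by_contra hne
        have h1 : (1:ℝ) ≤ |(n:ℝ)| := by exact_mod_cast Int.one_le_abs hne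
        rw [abs_mul, abs_of_pos h2π] at hs
        nlinarith
      simp [hn0]
    have hF0 : F 0 = 0 := by
      have heq : (fun _ : ℝ => (0:ℝ)) =ᶠ[𝓝 (0:ℝ)] (fun r => ∫ t in (0:ℝ)..r, F t) :=
        hev.mono fun s hs => hs.symm
      have hd2 : HasDerivAt (fun _ : ℝ => (0:ℝ)) (F 0) 0 :=
        (hΦd 0).congr_of_eventuallyEq heq
      exact (hd2.unique (hasDerivAt_const 0 0))
    have h7 : mm 0 - a₁ 0 + a₂ 0 = 0 := hF0
    have e1 : a₁ 0 = ω₁ (c 0) v := by rw [ha₁_def]; simp only; rw [hcv]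
    have e2 : a₂ 0 = ω₂ (c 0) v := by rw [ha₂_def]; simp only; rw [hcv]
    have e3 : mm 0 = mcPullback I g (c 0) v := by rw [hmm_def]; simp only; rw [hcv]
    rw [e1, e2, e3] at h7
    linarith
  · -- backward direction
    intro h γ hγ
    obtain ⟨hmcont, hkey⟩ := key_s19 g hg hg_unit hγ
    have hca₁ := hω₁ γ hγ
    rw [circleTransport_eq, circleTransport_eq, hkey 1]
    have hint : (∫ t in (0:ℝ)..1, ω₂ (γ t)
          (mfderiv 𝓘(ℝ, ℝ) I γ t ((1:ℝ) : TangentSpace 𝓘(ℝ, ℝ) t)))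
        = (∫ t in (0:ℝ)..1, ω₁ (γ t)
          (mfderiv 𝓘(ℝ, ℝ) I γ t ((1:ℝ) : TangentSpace 𝓘(ℝ, ℝ) t)))
        - (∫ t in (0:ℝ)..1, mcPullback I g (γ t)
          (mfderiv 𝓘(ℝ, ℝ) I γ t ((1:ℝ) : TangentSpace 𝓘(ℝ, ℝ) t))) := by
      have ha₂ : ∀ t : ℝ, ω₂ (γ t) (mfderiv 𝓘(ℝ, ℝ) I γ t ((1:ℝ) : TangentSpace 𝓘(ℝ, ℝ) t))
          = ω₁ (γ t) (mfderiv 𝓘(ℝ, ℝ) I γ t ((1:ℝ) : TangentSpace 𝓘(ℝ, ℝ) t))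
            - mcPullback I g (γ t) (mfderiv 𝓘(ℝ, ℝ) I γ t ((1:ℝ) : TangentSpace 𝓘(ℝ, ℝ) t)) :=
        fun t => h (γ t) _
      simp only [ha₂]
      exact intervalIntegral.integral_sub (hca₁.intervalIntegrable 0 1)
        (hmcont.intervalIntegrable 0 1)
    rw [hint, mul_assoc, ← Complex.exp_add, mul_comm]
    congr 1
    push_cast
    ring
end
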